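/- arXiv:cs/0511025 — 2 statements merged into one kernel-verified Lean document; each statement's English description precedes it below -/
import Mathlib

section
/- Alpha-equivalence is an equivalence relation: the relation ≈ defined on nominal terms is reflexive, symmetric, and transitive. -/
inductive Term (A C F : Type) : Type where
  | name : A → Term A C F
  | const : C → Term A C F
  | fn : F → List (Term A C F) → Term A C F
  | abs : A → Term A C F → Term A C F

variable {A C F : Type} [DecidableEq A]

def swapName (a b c : A) : A := if c = a then b else if c = b then a else c

def Term.swap (a b : A) : Term A C F → Term A C F
  | .name c => .name (swapName a b c)
  | .const c => .const c
  | .fn f ts => .fn f (ts.attach.map (fun x => Term.swap a b x.1))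
  | .abs c t => .abs (swapName a b c) (Term.swap a b t)
termination_by t => sizeOf t
decreasing_by all_goals (simp_wf; try omega)
              · have := List.sizeOf_lt_of_mem x.2; omega

inductive Term.Fresh : A → Term A C F → Prop where
  | name {a b : A} : a ≠ b → Term.Fresh a (.name b)
  | const {a : A} {c : C} : Term.Fresh a (.const c)
  | fn {a : A} {f : F} {ts : List (Term A C F)} :
      (∀ t ∈ ts, Term.Fresh a t) → Term.Fresh a (.fn f ts)
  | abs_neq {a b : A} {t : Term A C F} :
      a ≠ b → Term.Fresh a t → Term.Fresh a (.abs b t)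
  | abs_same {a : A} {t : Term A C F} : Term.Fresh a (.abs a t)

inductive Term.Aeq : Term A C F → Term A C F → Prop where
  | name {a : A} : Term.Aeq (.name a) (.name a)
  | const {c : C} : Term.Aeq (.const c) (.const c)
  | fn {f : F} {ts us : List (Term A C F)} :
      List.Forall₂ Term.Aeq ts us → Term.Aeq (.fn f ts) (.fn f us)
  | abs_same {a : A} {t u : Term A C F} :
      Term.Aeq t u → Term.Aeq (.abs a t) (.abs a u)
  | abs_diff {a b : A} {t u : Term A C F} :
      Term.Fresh a u → Term.Aeq t (u.swap a b) → Term.Aeq (.abs a t) (.abs b u)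

lemma swap_name (a b : A) (c : A) :
    Term.swap a b (Term.name c : Term A C F) = .name (swapName a b c) := by rw [Term.swap]

lemma swap_const (a b : A) (c : C) :
    Term.swap a b (Term.const c : Term A C F) = .const c := by rw [Term.swap]

lemma swap_abs (a b c : A) (t : Term A C F) :
    Term.swap a b (.abs c t) = .abs (swapName a b c) (Term.swap a b t) := by rw [Term.swap]

lemma swap_fn (a b : A) (f : F) (ts : List (Term A C F)) :
    Term.swap a b (.fn f ts) = .fn f (ts.map (Term.swap a b)) := by
  rw [Term.swap]; simp

lemma swapName_self (a c : A) : swapName a a c = c := by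
  unfold swapName; split_ifs <;> simp_all

lemma swapName_comm (a b c : A) : swapName a b c = swapName b a c := by
  unfold swapName; split_ifs <;> simp_all

lemma swapName_invol (a b c : A) : swapName a b (swapName a b c) = c := by
  unfold swapName; split_ifs <;> simp_all

lemma swapName_swapName (a b c d x : A) :
    swapName a b (swapName c d x) = swapName (swapName a b c) (swapName a b d) (swapName a b x) := by
  unfold swapName; split_ifs <;> simp_all

lemma swap_self (a : A) (t : Term A C F) : Term.swap a a t = t := by
  match t with
  | .name c => rw [Term.swap, swapName_self]
  | .const c => rw [Term.swap]
  | .fn f ts =>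
    rw [swap_fn]
    congr 1
    have : ∀ x ∈ ts, Term.swap a a x = x := fun x hx => by
      have := List.sizeOf_lt_of_mem hx
      exact swap_self a x
    calc ts.map (Term.swap a a) = ts.map id := List.map_congr_left this
      _ = ts := List.map_id ts
  | .abs c t => rw [Term.swap, swapName_self, swap_self a t]
termination_by sizeOf t

lemma swap_comm (a b : A) (t : Term A C F) : Term.swap a b t = Term.swap b a t := by
  match t with
  | .name c => rw [Term.swap, Term.swap, swapName_comm]
  | .const c => rw [Term.swap, Term.swap]
  | .fn f ts =>
    rw [swap_fn, swap_fn]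
    congr 1
    exact List.map_congr_left fun x hx => by
      have := List.sizeOf_lt_of_mem hx
      exact swap_comm a b x
  | .abs c t => rw [Term.swap, Term.swap, swapName_comm, swap_comm a b t]
termination_by sizeOf t

lemma swap_invol (a b : A) (t : Term A C F) : Term.swap a b (Term.swap a b t) = t := by
  match t with
  | .name c => rw [Term.swap, Term.swap, swapName_invol]
  | .const c => rw [Term.swap, Term.swap]
  | .fn f ts =>
    rw [swap_fn, swap_fn, List.map_map]
    have : ∀ x ∈ ts, (Term.swap a b ∘ Term.swap a b) x = x := fun x hx => by
      have := List.sizeOf_lt_of_mem hx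
      exact swap_invol a b x
    congr 1
    calc ts.map (Term.swap a b ∘ Term.swap a b) = ts.map id := List.map_congr_left this
      _ = ts := List.map_id ts
  | .abs c t => rw [Term.swap, Term.swap, swapName_invol, swap_invol a b t]
termination_by sizeOf t

lemma swap_swap (a b c d : A) (t : Term A C F) :
    Term.swap a b (Term.swap c d t)
      = Term.swap (swapName a b c) (swapName a b d) (Term.swap a b t) := by
  match t with
  | .name x => simp only [swap_name]; rw [swapName_swapName]
  | .const x => simp only [swap_const]
  | .fn f ts =>
    rw [swap_fn, swap_fn, swap_fn, swap_fn, List.map_map, List.map_map]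
    congr 1
    exact List.map_congr_left fun x hx => by
      have := List.sizeOf_lt_of_mem hx
      exact swap_swap a b c d x
  | .abs x t =>
    simp only [swap_abs]; rw [swapName_swapName, swap_swap a b c d t]
termination_by sizeOf t

lemma swapName_ne (a b c d : A) (h : c ≠ d) : swapName a b c ≠ swapName a b d := by
  intro he
  apply h
  have := congrArg (swapName a b) he
  rwa [swapName_invol, swapName_invol] at this

lemma fresh_swap_iff {c : A} {t : Term A C F} (a b : A) (h : Term.Fresh c t) :
    Term.Fresh (swapName a b c) (Term.swap a b t) := by
  induction h with
  | name hne => rw [swap_name]; exact .name (swapName_ne a b _ _ hne)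
  | const => rw [swap_const]; exact .const
  | fn _ ih =>
    rw [swap_fn]
    exact .fn fun t ht => by
      obtain ⟨s, hs, rfl⟩ := List.mem_map.mp ht
      exact ih s hs
  | abs_neq hne _ ih => rw [swap_abs]; exact .abs_neq (swapName_ne a b _ _ hne) ih
  | abs_same => rw [swap_abs]; exact .abs_same

lemma fresh_unswap {c a b : A} {t : Term A C F}
    (h : Term.Fresh (swapName a b c) (Term.swap a b t)) : Term.Fresh c t := by
  have := fresh_swap_iff a b h
  rwa [swapName_invol, swap_invol] at this

lemma aeq_refl (t : Term A C F) : Term.Aeq t t := by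
  match t with
  | .name c => exact .name
  | .const c => exact .const
  | .fn f ts =>
    exact .fn (List.forall₂_same.mpr fun x hx => by
      have := List.sizeOf_lt_of_mem hx
      exact aeq_refl x)
  | .abs c t => exact .abs_same (aeq_refl t)
termination_by sizeOf t

lemma forall₂_map_of_mem {g : Term A C F → Term A C F} :
    ∀ {ts us : List (Term A C F)},
      (∀ x ∈ ts, ∀ y, Term.Aeq x y → Term.Aeq (g x) (g y)) →
      List.Forall₂ Term.Aeq ts us → List.Forall₂ Term.Aeq (ts.map g) (us.map g)
  | _, _, _, .nil => .nil
  | t :: ts, u :: us, key, .cons h hs =>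
    .cons (key t (by simp) u h)
      (forall₂_map_of_mem (fun x hx => key x (by simp [hx])) hs)

lemma aeq_swap {t u : Term A C F} (a b : A) (h : Term.Aeq t u) :
    Term.Aeq (Term.swap a b t) (Term.swap a b u) := by
  match t, u, h with
  | _, _, .name => exact aeq_refl _
  | _, _, .const => exact aeq_refl _
  | .fn f ts, .fn _ us, .fn h =>
    rw [swap_fn, swap_fn]
    refine .fn (forall₂_map_of_mem ?_ h)
    intro x hx y hxy
    have := List.sizeOf_lt_of_mem hx
    exact aeq_swap a b hxy
  | .abs c t, .abs _ u, .abs_same h =>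
    rw [swap_abs, swap_abs]
    exact .abs_same (aeq_swap a b h)
  | .abs c t, .abs d u, .abs_diff hf h =>
    rw [swap_abs, swap_abs]
    refine .abs_diff (fresh_swap_iff a b hf) ?_
    have := aeq_swap a b h
    rwa [swap_swap a b c d u] at this
termination_by sizeOf t

lemma forall₂_fresh_of_mem {c : A} :
    ∀ {ts us : List (Term A C F)},
      (∀ x ∈ ts, ∀ y, Term.Aeq x y → Term.Fresh c x → Term.Fresh c y) →
      List.Forall₂ Term.Aeq ts us → (∀ t ∈ ts, Term.Fresh c t) → ∀ u ∈ us, Term.Fresh c u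
  | _, _, _, .nil, _ => by simp
  | t :: ts, u :: us, key, .cons h hs, hf => by
    intro x hx
    rcases List.mem_cons.mp hx with rfl | hx
    · exact key t (by simp) x h (hf t (by simp))
    · exact forall₂_fresh_of_mem (fun y hy => key y (by simp [hy])) hs
        (fun y hy => hf y (by simp [hy])) x hx

lemma aeq_fresh {c : A} {t u : Term A C F} (h : Term.Aeq t u) (hf : Term.Fresh c t) :
    Term.Fresh c u := by
  match t, u, h with
  | _, _, .name => exact hf
  | _, _, .const => exact hf
  | .fn f ts, .fn _ us, .fn h =>
    cases hf with
    | fn hf =>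
      refine .fn (forall₂_fresh_of_mem ?_ h hf)
      intro x hx y hxy hcx
      have := List.sizeOf_lt_of_mem hx
      exact aeq_fresh hxy hcx
  | .abs a t, .abs _ u, .abs_same h =>
    cases hf with
    | abs_neq hne hft => exact .abs_neq hne (aeq_fresh h hft)
    | abs_same => exact .abs_same
  | .abs a t, .abs b u, .abs_diff hfr h =>
    cases hf with
    | abs_same =>
      by_cases hab : c = b
      · subst hab; exact .abs_same
      · exact .abs_neq hab hfr
    | abs_neq hne hft =>
      have hcs : Term.Fresh c (u.swap a b) := aeq_fresh h hft
      by_cases hcb : c = b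
      · subst hcb; exact .abs_same
      · refine .abs_neq hcb ?_
        have hcn : swapName a b c = c := by
          unfold swapName; simp [hne, hcb]
        exact fresh_unswap (c := c) (a := a) (b := b) (by rwa [hcn])
termination_by sizeOf t

lemma fresh_fresh_swap {a b : A} {t : Term A C F}
    (ha : Term.Fresh a t) (hb : Term.Fresh b t) : Term.Aeq (Term.swap a b t) t := by
  match t with
  | .name c =>
    cases ha with | name hac => ?_
    cases hb with | name hbc => ?_
    rw [swap_name]
    have : swapName a b c = c := by unfold swapName; simp [Ne.symm hac, Ne.symm hbc]
    rw [this]; exact .name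
  | .const c => rw [swap_const]; exact .const
  | .fn f ts =>
    cases ha with | fn ha => ?_
    cases hb with | fn hb => ?_
    rw [swap_fn]
    refine .fn ?_
    refine List.forall₂_map_left_iff.mpr ?_
    refine List.forall₂_same.mpr fun x hx => ?_
    have := List.sizeOf_lt_of_mem hx
    exact fresh_fresh_swap (ha x hx) (hb x hx)
  | .abs c t =>
    rw [swap_abs]
    by_cases hac : a = c
    · subst hac
      by_cases hbc : b = a
      · subst hbc
        rw [swapName_self, swap_self]
        exact aeq_refl _
      · -- a = c, b ≠ c: swapName a b a = b
        have h1 : swapName a b a = b := by unfold swapName; simp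
        rw [h1]
        have hbt : Term.Fresh b t := by
          cases hb with
          | abs_neq _ h => exact h
          | abs_same => exact absurd rfl hbc
        refine .abs_diff hbt ?_
        rw [swap_comm b a]
        exact aeq_refl _
    · by_cases hbc : b = c
      · subst hbc
        have h1 : swapName a b b = a := by unfold swapName; simp [Ne.symm hac]
        rw [h1]
        have hat : Term.Fresh a t := by
          cases ha with
          | abs_neq _ h => exact h
          | abs_same => exact absurd rfl hac
        exact .abs_diff hat (aeq_refl _)
      · have h1 : swapName a b c = c := by
          unfold swapName; simp [Ne.symm hac, Ne.symm hbc]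
        rw [h1]
        have hat : Term.Fresh a t := by
          cases ha with
          | abs_neq _ h => exact h
          | abs_same => exact absurd rfl hac
        have hbt : Term.Fresh b t := by
          cases hb with
          | abs_neq _ h => exact h
          | abs_same => exact absurd rfl hbc
        exact .abs_same (fresh_fresh_swap hat hbt)
termination_by sizeOf t

lemma forall₂_symm_of_mem :
    ∀ {ts us : List (Term A C F)},
      (∀ x ∈ ts, ∀ y, Term.Aeq x y → Term.Aeq y x) →
      List.Forall₂ Term.Aeq ts us → List.Forall₂ Term.Aeq us ts
  | _, _, _, .nil => .nil
  | t :: ts, u :: us, key, .cons h hs =>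
    .cons (key t (by simp) u h) (forall₂_symm_of_mem (fun x hx => key x (by simp [hx])) hs)

lemma aeq_symm {t u : Term A C F} (h : Term.Aeq t u) : Term.Aeq u t := by
  match t, u, h with
  | _, _, .name => exact .name
  | _, _, .const => exact .const
  | .fn f ts, .fn _ us, .fn h =>
    refine .fn (forall₂_symm_of_mem ?_ h)
    intro x hx y hxy
    have := List.sizeOf_lt_of_mem hx
    exact aeq_symm hxy
  | .abs a t, .abs _ u, .abs_same h => exact .abs_same (aeq_symm h)
  | .abs a t, .abs b u, .abs_diff hfr h =>
    have hsymm : Term.Aeq (u.swap a b) t := aeq_symm h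
    have hft : Term.Fresh b t := by
      refine aeq_fresh hsymm ?_
      have := fresh_swap_iff a b hfr
      rwa [show swapName a b a = b by unfold swapName; simp] at this
    refine .abs_diff hft ?_
    have := aeq_swap a b hsymm
    rw [swap_invol] at this
    rwa [swap_comm b a]
termination_by sizeOf t

lemma forall₂_trans_of_mem :
    ∀ {ts us vs : List (Term A C F)},
      (∀ x ∈ ts, ∀ y z, Term.Aeq x y → Term.Aeq y z → Term.Aeq x z) →
      List.Forall₂ Term.Aeq ts us → List.Forall₂ Term.Aeq us vs →
      List.Forall₂ Term.Aeq ts vs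
  | _, _, _, _, .nil, .nil => .nil
  | t :: ts, u :: us, v :: vs, key, .cons h hs, .cons h' hs' =>
    .cons (key t (by simp) u v h h')
      (forall₂_trans_of_mem (fun x hx => key x (by simp [hx])) hs hs')

lemma aeq_trans {t u v : Term A C F} (h1 : Term.Aeq t u) (h2 : Term.Aeq u v) :
    Term.Aeq t v := by
  match t, u, v, h1, h2 with
  | _, _, _, .name, .name => exact .name
  | _, _, _, .const, .const => exact .const
  | .fn f ts, .fn _ us, .fn _ vs, .fn h1, .fn h2 =>
    refine .fn (forall₂_trans_of_mem ?_ h1 h2)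
    intro x hx y z hxy hyz
    have := List.sizeOf_lt_of_mem hx
    exact aeq_trans hxy hyz
  | .abs a t, .abs _ u, .abs _ v, .abs_same h1, .abs_same h2 =>
    exact .abs_same (aeq_trans h1 h2)
  | .abs a t, .abs _ u, .abs b v, .abs_same h1, .abs_diff hf h2 =>
    exact .abs_diff hf (aeq_trans h1 h2)
  | .abs a t, .abs b u, .abs _ v, .abs_diff hf h1, .abs_same h2 =>
    refine .abs_diff (aeq_fresh h2 hf) (aeq_trans h1 (aeq_swap a b h2))
  | .abs a t, .abs b u, .abs c v, .abs_diff hfu h1, .abs_diff hfv h2 =>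
    -- h1 : t ≈ u.swap a b, hfu : a # u ; h2 : u ≈ v.swap b c, hfv : b # v
    have h2' : Term.Aeq (u.swap a b) ((v.swap b c).swap a b) := aeq_swap a b h2
    by_cases hab : a = b
    · subst hab
      rw [swap_self] at h1
      exact .abs_diff hfv (aeq_trans h1 h2)
    · by_cases hbc : b = c
      · subst hbc
        rw [swap_self] at h2
        exact .abs_diff (aeq_fresh h2 hfu) (aeq_trans h1 (aeq_swap a b h2))
      · by_cases hac : a = c
        · subst hac
          have he : Term.swap a b (Term.swap b a v) = v := by
            rw [swap_comm b a, swap_invol]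
          rw [he] at h2'
          exact .abs_same (aeq_trans h1 h2')
        · have hfav : Term.Fresh a v := by
            have h3 : Term.Fresh a (Term.swap b c v) := aeq_fresh h2 hfu
            have hn : swapName b c a = a := by unfold swapName; simp [hab, hac]
            exact fresh_unswap (c := a) (a := b) (b := c) (by rwa [hn])
          have he : Term.swap a b (Term.swap b c v) = Term.swap a c (Term.swap a b v) := by
            rw [swap_swap a b b c v,
              show swapName a b b = a by unfold swapName; simp [Ne.symm hab],
              show swapName a b c = c by
                unfold swapName
                rw [if_neg (Ne.symm hac), if_neg (fun h => hbc (Eq.symm h))]]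
          rw [he] at h2'
          have h4 : Term.Aeq (Term.swap a c (Term.swap a b v)) (Term.swap a c v) :=
            aeq_swap a c (fresh_fresh_swap hfav hfv)
          exact .abs_diff hfav (aeq_trans (aeq_trans h1 h2') h4)
termination_by sizeOf t

theorem aeq_equivalence : Equivalence (Term.Aeq (A := A) (C := C) (F := F)) :=
  ⟨aeq_refl, fun h => aeq_symm h, fun h1 h2 => aeq_trans h1 h2⟩
end

section
/- Alpha-equivalent terms have the same support: if t ≈ u, then for every name a, a # t if and only if a # u. -/
variable {A C F : Type} [DecidableEq A]

/-! Freshness is equivariant: `c # (a b) • t ↔ (a b) c # t`. Hence in the case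
`abs a t ≈ abs b u` with `a # u` and `t ≈ (a b) • u`, the names `a` and `b` are fresh on both
sides and every other name is fixed by the swap. -/

theorem Equiv.eq_or_swap_apply_iff {α : Type*} [DecidableEq α] {P : α → Prop} {a b x : α}
    (ha : P a) : x = a ∨ P (Equiv.swap a b x) ↔ x = b ∨ P x := by
  by_cases hxa : x = a
  · subst hxa
    simp only [Equiv.swap_apply_left, true_or, ha, or_true]
  by_cases hxb : x = b
  · subst hxb
    simp only [Equiv.swap_apply_right, ha, or_true, true_or]
  · rw [Equiv.swap_apply_of_ne_of_ne hxa hxb]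
    simp only [hxa, hxb, false_or]

theorem swapName_eq_swap (a b : A) : swapName a b = ⇑(Equiv.swap a b) := by
  funext c
  rw [Equiv.swap_apply_def]
  rfl

namespace Term

theorem swap_fn (a b : A) (f : F) (ts : List (Term A C F)) :
    (fn f ts).swap a b = fn f (ts.map (Term.swap a b)) := by
  rw [Term.swap, List.map_attach_eq_pmap, List.pmap_eq_map]

theorem fresh_name_iff {A C F : Type} {a b : A} : (name b : Term A C F).Fresh a ↔ a ≠ b :=
  ⟨fun | .name h => h, .name⟩

theorem fresh_fn_iff {A C F : Type} {a : A} {f : F} {ts : List (Term A C F)} :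
    (fn f ts).Fresh a ↔ ∀ t ∈ ts, t.Fresh a :=
  ⟨fun | .fn h => h, .fn⟩

theorem fresh_abs_iff {a b : A} {t : Term A C F} :
    (abs b t).Fresh a ↔ a = b ∨ t.Fresh a := by
  refine ⟨fun | .abs_neq _ h => .inr h | .abs_same => .inl rfl, ?_⟩
  rintro (rfl | h)
  · exact .abs_same
  · by_cases hab : a = b
    · exact hab ▸ .abs_same
    · exact .abs_neq hab h

theorem fresh_swap_iff (a b c : A) : ∀ t : Term A C F,
    (t.swap a b).Fresh c ↔ t.Fresh (Equiv.swap a b c)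
  | name d => by
      rw [Term.swap, fresh_name_iff, fresh_name_iff, swapName_eq_swap, ne_eq, ne_eq,
        Equiv.swap_apply_eq_iff, eq_comm]
  | const d => by
      rw [Term.swap]
      exact ⟨fun _ => .const, fun _ => .const⟩
  | fn f ts => by
      rw [swap_fn, fresh_fn_iff, fresh_fn_iff, List.forall_mem_map]
      exact forall₂_congr fun s _ => fresh_swap_iff a b c s
  | abs d t => by
      rw [Term.swap, fresh_abs_iff, fresh_abs_iff, fresh_swap_iff a b c t, swapName_eq_swap,
        Equiv.swap_apply_eq_iff, eq_comm]

theorem Aeq.fresh_iff {t u : Term A C F} (h : t.Aeq u) (a : A) : t.Fresh a ↔ u.Fresh a := by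
  induction h using Aeq.rec
    (motive_2 := fun ts us _ => ∀ a, (∀ t ∈ ts, t.Fresh a) ↔ ∀ u ∈ us, u.Fresh a)
    generalizing a with
  | name | const => exact Iff.rfl
  | fn _ ih => rw [fresh_fn_iff, fresh_fn_iff, ih]
  | abs_same _ ih => rw [fresh_abs_iff, fresh_abs_iff, ih]
  | abs_diff hfresh _ ih =>
      rw [fresh_abs_iff, fresh_abs_iff, ih, fresh_swap_iff]
      exact Equiv.eq_or_swap_apply_iff (P := (Fresh · _)) hfresh
  | nil => exact iff_of_true (List.forall_mem_nil _) (List.forall_mem_nil _)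
  | cons _ _ ih ihs => rw [List.forall_mem_cons, List.forall_mem_cons, ih, ihs]

end Term

theorem aeq_same_support {t u : Term A C F} (h : t.Aeq u) (a : A) :
    t.Fresh a ↔ u.Fresh a := h.fresh_iff a
end
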